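/- Let G = ⊕_{n≥0} G_n be a positively graded Noetherian ring with (G_0, 𝔫) local and G = G_0[G_1], let L be a finitely generated graded G-module, and set W = H⁰_{𝔫G}(L). If f ∈ G_1 is G_+-filter regular for L, then fL_{n−1} ∩ W_n = fW_{n−1} for all n ≫ 0. -/

import Mathlib

open Filter

noncomputable section

/-- The length of a module, as the height of `⊤` in the submodule lattice. -/
def mLength (R M : Type*) [CommRing R] [AddCommGroup M] [Module R M] : ℕ∞ :=
  Order.height (⊤ : Submodule R M)

/-- The Krull dimension of a module, via the annihilator. -/
def mDim (R M : Type*) [CommRing R] [AddCommGroup M] [Module R M] : WithBot ℕ∞ :=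
  ringKrullDim (R ⧸ Module.annihilator R M)

/-- `H⁰_I(N)`: elements killed by a power of `I` (0-th local cohomology). -/
def H0 {R : Type*} [CommRing R] (I : Ideal R) (N : Type*) [AddCommGroup N] [Module R N] :
    Submodule R N :=
  ⨆ n : ℕ, Submodule.torsionBySet R N ((I ^ n : Ideal R) : Set R)

/-- The irrelevant ideal `G₊` of a positively graded ring: the ideal generated by the
homogeneous elements of positive degree. -/
def gPlus {R G : Type*} [CommRing R] [CommRing G] [Algebra R G]
    (𝒜 : ℕ → Submodule R G) : Ideal G :=
  Ideal.span {x : G | ∃ n : ℕ, 0 < n ∧ x ∈ 𝒜 n}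

/-- `f` is `G₊`-filter regular for a `G`-module `L`: `f ∉ P` for every associated prime
`P` of `L` with `G₊ ⊄ P`. -/
def FilterRegular {R G : Type*} [CommRing R] [CommRing G] [Algebra R G]
    (𝒜 : ℕ → Submodule R G) (f : G) (L : Type*) [AddCommGroup L] [Module G L] : Prop :=
  ∀ P ∈ associatedPrimes G L, ¬ gPlus 𝒜 ≤ P → f ∉ P

/-- The `j`-multiplicity `j_d(G, L)` of a graded module `L` with components `comp` over a
graded ring `G` with `𝔫G = nG`: the limit of `(d−1)!/n^(d−1) · length_{G₀} Wₙ`, where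
`W = H⁰_{𝔫G}(L)` and `Wₙ` is its `n`-th graded component. -/
def jMultGr (R : Type*) {G : Type*} [CommRing R] [CommRing G] [Algebra R G] (nG : Ideal G)
    (L : Type*) [AddCommGroup L] [Module R L] [Module G L] [IsScalarTower R G L]
    (comp : ℕ → Submodule R L) (d : ℕ) : ℝ :=
  limUnder atTop fun n : ℕ =>
    ((d - 1).factorial : ℝ) / (n : ℝ) ^ (d - 1) *
      ((mLength R (Submodule.restrictScalars R (H0 nG L) ⊓ comp n : Submodule R L)).toNat : ℝ)


/-!
Filter regularity forces every associated prime of `ker (f • ·)` to contain `G₊`, so a power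
`G₊ˢ` kills this kernel; as `G` is standard graded, so does every `G_e` with `e ≥ s`. The
homogeneous elements of the kernel generate a submodule which, `L` being Noetherian, is already
generated by those of degree `≤ n₀`; hence no nonzero element of `L_m` with `m ≥ n₀ + s` is
killed by `f`. Now let `f y ∈ W` with `y ∈ L_n`, `n ≫ 0`. For `a ∈ (𝔫G)ᵏ` each homogeneous
component `a_e` lies in `(𝔫G)ᵏ`, so `f (a_e y) = a_e (f y) = 0` with `a_e y ∈ L_{e+n}`; thus
`a_e y = 0` and `y ∈ W`.
-/

open DirectSum Submodule

theorem mem_H0_iff {A M : Type*} [CommRing A] [AddCommGroup M] [Module A M] {I : Ideal A}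
    {x : M} : x ∈ H0 I M ↔ ∃ k : ℕ, ∀ a ∈ I ^ k, a • x = 0 := by
  have hmono : Monotone fun n : ℕ => torsionBySet A M ((I ^ n : Ideal A) : Set A) :=
    fun _ _ hij => torsionBySet_le_torsionBySet_of_subset (Ideal.pow_le_pow_right hij)
  simp only [H0, mem_iSup_of_directed _ hmono.directed_le, mem_torsionBySet_iff,
    Subtype.forall, SetLike.mem_coe]

theorem exists_pow_le_annihilator_of_forall_le_associatedPrimes {A M : Type*} [CommRing A]
    [IsNoetherianRing A] [AddCommGroup M] [Module A M] [Module.Finite A M] {I : Ideal A}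
    (h : ∀ P ∈ associatedPrimes A M, I ≤ P) : ∃ s : ℕ, I ^ s ≤ Module.annihilator A M := by
  refine Ideal.exists_pow_le_of_le_radical_of_fg ?_ (IsNoetherian.noetherian I)
  rw [← Ideal.sInf_minimalPrimes]
  exact le_sInf fun P hP =>
    h P (Module.associatedPrimes.minimalPrimes_annihilator_subset_associatedPrimes A M hP)

theorem exists_pow_gPlus_le_annihilator_ker {R G : Type*} [CommRing R] [CommRing G]
    [IsNoetherianRing G] [Algebra R G] {𝒜 : ℕ → Submodule R G} {L : Type*} [AddCommGroup L]
    [Module G L] [Module.Finite G L] {f : G} (hreg : FilterRegular 𝒜 f L) :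
    ∃ s : ℕ, gPlus 𝒜 ^ s ≤ Module.annihilator G (LinearMap.ker (LinearMap.lsmul G L f)) := by
  refine exists_pow_le_annihilator_of_forall_le_associatedPrimes fun P hP => ?_
  by_contra hle
  refine hreg P (associatedPrimes.subset_of_injective (subtype_injective _) hP) hle ?_
  refine hP.annihilator_le ?_
  rw [annihilator_top]
  exact Module.mem_annihilator.mpr fun x => Subtype.ext (LinearMap.mem_ker.mp x.2)

theorem Ideal.IsHomogeneous.pow {ι σ A : Type*} [CommSemiring A] [DecidableEq ι] [AddMonoid ι]
    [SetLike σ A] [AddSubmonoidClass σ A] {𝒜 : ι → σ} [GradedRing 𝒜] {I : Ideal A}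
    (hI : I.IsHomogeneous 𝒜) (k : ℕ) :
    (I ^ k).IsHomogeneous 𝒜 := by
  induction k with
  | zero => simpa only [pow_zero, Ideal.one_eq_top] using Ideal.IsHomogeneous.top 𝒜
  | succ k ih => simpa only [pow_succ] using ih.mul hI

theorem isHomogeneous_map_algebraMap {R G : Type*} [CommRing R] [CommRing G] [Algebra R G]
    (𝒜 : ℕ → Submodule R G) [GradedAlgebra 𝒜] (J : Ideal R) :
    (J.map (algebraMap R G)).IsHomogeneous 𝒜 :=
  Ideal.homogeneous_span 𝒜 _ fun _ ⟨r, _, hr⟩ => ⟨0, hr ▸ SetLike.algebraMap_mem_graded 𝒜 r⟩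

theorem mem_gPlus_pow_of_mem_grade {R G : Type*} [CommRing R] [CommRing G] [Algebra R G]
    {𝒜 : ℕ → Submodule R G} (hstd : ∀ n : ℕ, 𝒜 n = 𝒜 1 ^ n) {s e : ℕ} (hse : s ≤ e) {a : G}
    (ha : a ∈ 𝒜 e) : a ∈ gPlus 𝒜 ^ s := by
  have h1 : 𝒜 1 ≤ (gPlus 𝒜).restrictScalars R := fun x hx => Ideal.subset_span ⟨1, one_pos, hx⟩
  have hpow : ∀ n : ℕ, 𝒜 1 ^ n ≤ (gPlus 𝒜 ^ n).restrictScalars R := by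
    intro n
    induction n with
    | zero => simp [Ideal.one_eq_top]
    | succ n ih =>
      rw [pow_succ, Submodule.mul_le]
      exact fun x hx y hy => by rw [pow_succ]; exact Ideal.mul_mem_mul (ih hx) (h1 hy)
  exact Ideal.pow_le_pow_right hse (hpow e (hstd e ▸ ha))

section GradedModule

variable {R G : Type*} [CommRing R] [CommRing G] [Algebra R G] (𝒜 : ℕ → Submodule R G)
  [GradedAlgebra 𝒜] {L : Type*} [AddCommGroup L] [Module R L] [Module G L]
  (ℳ : ℕ → Submodule R L) [SetLike.GradedSMul 𝒜 ℳ]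

theorem mem_H0_of_smul_mem_H0 {I : Ideal G} (hI : I.IsHomogeneous 𝒜) {f : G} {N n : ℕ}
    (hf : ∀ m ≥ N, ∀ x ∈ ℳ m, f • x = 0 → x = 0) (hn : N ≤ n) {y : L} (hy : y ∈ ℳ n)
    (hfy : f • y ∈ H0 I L) : y ∈ H0 I L := by
  classical
  obtain ⟨k, hk⟩ := mem_H0_iff.mp hfy
  refine mem_H0_iff.mpr ⟨k, fun a ha => ?_⟩
  rw [← sum_support_decompose 𝒜 a, Finset.sum_smul]
  refine Finset.sum_eq_zero fun e _ => hf (e + n) (by omega) _ ?_ ?_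
  · exact SetLike.GradedSMul.smul_mem (SetLike.coe_mem (decompose 𝒜 a e)) hy
  · rw [smul_comm]
    exact hk _ (hI.pow k e ha)

variable [Decomposition ℳ]

theorem coe_decompose_smul_of_mem (c : G) {z : L} {d m : ℕ} (hz : z ∈ ℳ d) (hdm : d ≤ m) :
    (decompose ℳ (c • z) m : L) = (decompose 𝒜 c (m - d) : G) • z := by
  induction c using Decomposition.inductionOn 𝒜 with
  | zero => simp
  | @homogeneous e c =>
    have hcz : (c : G) • z ∈ ℳ (e + d) := SetLike.GradedSMul.smul_mem c.2 hz
    by_cases he : e = m - d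
    · subst he
      rw [Nat.sub_add_cancel hdm] at hcz
      rw [decompose_of_mem_same ℳ hcz, decompose_of_mem_same 𝒜 c.2]
    · rw [decompose_of_mem_ne ℳ hcz (by omega), decompose_of_mem_ne 𝒜 c.2 he, zero_smul]
  | add c₁ c₂ h₁ h₂ =>
    rw [add_smul, decompose_add, DirectSum.add_apply, Submodule.coe_add, h₁, h₂, decompose_add,
      DirectSum.add_apply, Submodule.coe_add, add_smul]

theorem exists_forall_ge_mem_grade_eq_zero [IsNoetherian G L] {K : Submodule G L} {s : ℕ}
    (hK : ∀ e ≥ s, ∀ a ∈ 𝒜 e, ∀ z ∈ K, a • z = 0) :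
    ∃ N : ℕ, ∀ m ≥ N, ∀ x ∈ K, x ∈ ℳ m → x = 0 := by
  let A : ℕ →o Submodule G L :=
    ⟨fun n => span G (⋃ j ≤ n, (K : Set L) ∩ ℳ j), fun _ _ hij =>
      span_mono (Set.biUnion_subset_biUnion_left fun _ hj => le_trans hj hij)⟩
  obtain ⟨n₀, hn₀⟩ := monotone_stabilizes_iff_noetherian.mpr ‹_› A
  refine ⟨n₀ + s, fun m hm x hxK hxm => ?_⟩
  have hxA : x ∈ A n₀ := by
    rw [hn₀ m (by omega)]
    exact subset_span (Set.mem_iUnion₂.mpr ⟨m, le_rfl, hxK, hxm⟩)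
  -- for a generator `z ∈ K ∩ ℳ j`, the degree-`m` part of `c • z` is `c_{m-j} • z`, `m - j ≥ s`
  have hcomp : ∀ y ∈ A n₀, ∀ c : G, (decompose ℳ (c • y) m : L) = 0 := by
    intro y hy
    induction hy using span_induction with
    | mem z hz =>
      obtain ⟨hzK, j, hj, hzj⟩ : z ∈ K ∧ ∃ j ≤ n₀, z ∈ ℳ j := by simpa using hz
      intro c
      rw [coe_decompose_smul_of_mem 𝒜 ℳ c hzj (by omega)]
      exact hK _ (by omega) _ (SetLike.coe_mem _) z hzK
    | zero => simp
    | add y z _ _ hy hz =>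
      intro c
      rw [smul_add, decompose_add, DirectSum.add_apply, Submodule.coe_add, hy, hz, add_zero]
    | smul d y _ hy => intro c; rw [smul_smul]; exact hy _
  simpa [decompose_of_mem_same ℳ hxm] using hcomp x hxA 1

theorem exists_forall_ge_smul_injective_on_grade [IsNoetherianRing G] [Module.Finite G L]
    (hstd : ∀ n : ℕ, 𝒜 n = 𝒜 1 ^ n) {f : G} (hreg : FilterRegular 𝒜 f L) :
    ∃ N : ℕ, ∀ m ≥ N, ∀ x ∈ ℳ m, f • x = 0 → x = 0 := by
  obtain ⟨s, hs⟩ := exists_pow_gPlus_le_annihilator_ker hreg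
  obtain ⟨N, hN⟩ := exists_forall_ge_mem_grade_eq_zero 𝒜 ℳ
    (K := LinearMap.ker (LinearMap.lsmul G L f)) fun e he a ha z hz => congrArg Subtype.val <|
      Module.mem_annihilator.mp (hs (mem_gPlus_pow_of_mem_grade hstd he ha)) ⟨z, hz⟩
  exact ⟨N, fun m hm x hx hfx => hN m hm x hfx hx⟩

end GradedModule

theorem stmt_2_general {R G : Type*} [CommRing R] [IsLocalRing R]
    [CommRing G] [IsNoetherianRing G] [Algebra R G]
    (𝒜 : ℕ → Submodule R G) [GradedAlgebra 𝒜]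
    (hstd : ∀ n : ℕ, 𝒜 n = 𝒜 1 ^ n)
    (L : Type*) [AddCommGroup L] [Module R L] [Module G L] [IsScalarTower R G L]
    [Module.Finite G L]
    (ℳ : ℕ → Submodule R L) [DirectSum.Decomposition ℳ] [SetLike.GradedSMul 𝒜 ℳ]
    (f : G) (hf1 : f ∈ 𝒜 1)
    (hreg : FilterRegular 𝒜 f L) :
    ∃ N : ℕ, ∀ n ≥ N,
      Submodule.map ((LinearMap.lsmul G L f).restrictScalars R) (ℳ n) ⊓
          (Submodule.restrictScalars R
            (H0 (Ideal.map (algebraMap R G) (IsLocalRing.maximalIdeal R)) L) ⊓ ℳ (n + 1)) =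
        Submodule.map ((LinearMap.lsmul G L f).restrictScalars R)
          (Submodule.restrictScalars R
            (H0 (Ideal.map (algebraMap R G) (IsLocalRing.maximalIdeal R)) L) ⊓ ℳ n) := by
  obtain ⟨N, hN⟩ := exists_forall_ge_smul_injective_on_grade 𝒜 ℳ hstd hreg
  have hhom := isHomogeneous_map_algebraMap 𝒜 (IsLocalRing.maximalIdeal R)
  refine ⟨N, fun n hn => le_antisymm ?_ ?_⟩
  · rintro _ ⟨⟨y, hy, rfl⟩, hfyW, -⟩
    exact ⟨y, ⟨mem_H0_of_smul_mem_H0 𝒜 ℳ hhom hN hn hy hfyW, hy⟩, rfl⟩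
  · rintro _ ⟨y, ⟨hyW, hy⟩, rfl⟩
    exact ⟨⟨y, hy, rfl⟩, Submodule.smul_mem _ f hyW,
      by simpa [add_comm] using SetLike.GradedSMul.smul_mem hf1 hy⟩

/-- Lemma 2.2 (ii): if `f ∈ G₁` is `G₊`-filter regular for `L`, then
`fL_{n-1} ∩ W_n = fW_{n-1}` for all `n ≫ 0`, where `W = H⁰_{𝔫G}(L)` and
`W_n = W ∩ L_n`. -/
theorem stmt_2 {R G : Type*} [CommRing R] [IsNoetherianRing R] [IsLocalRing R]
    [CommRing G] [IsNoetherianRing G] [Algebra R G]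
    (𝒜 : ℕ → Submodule R G) [GradedAlgebra 𝒜]
    (hstd : ∀ n : ℕ, 𝒜 n = 𝒜 1 ^ n)
    (L : Type*) [AddCommGroup L] [Module R L] [Module G L] [IsScalarTower R G L]
    [Module.Finite G L]
    (ℳ : ℕ → Submodule R L) [DirectSum.Decomposition ℳ] [SetLike.GradedSMul 𝒜 ℳ]
    (f : G) (hf1 : f ∈ 𝒜 1)
    (hreg : FilterRegular 𝒜 f L) :
    ∃ N : ℕ, ∀ n ≥ N,
      Submodule.map ((LinearMap.lsmul G L f).restrictScalars R) (ℳ n) ⊓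
          (Submodule.restrictScalars R
            (H0 (Ideal.map (algebraMap R G) (IsLocalRing.maximalIdeal R)) L) ⊓ ℳ (n + 1)) =
        Submodule.map ((LinearMap.lsmul G L f).restrictScalars R)
          (Submodule.restrictScalars R
            (H0 (Ideal.map (algebraMap R G) (IsLocalRing.maximalIdeal R)) L) ⊓ ℳ n) :=
  stmt_2_general 𝒜 hstd L ℳ f hf1 hreg
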